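/- arXiv:1705.01000 — 2 statements merged into one kernel-verified Lean document; each statement's English description precedes it below -/
import Mathlib

section
/- If a Boolean σ-algebra B is weakly distributive and has a tight σ-finite cc fragmentation, then B is uniformly weakly distributive. -/
universe u

/-- A Boolean σ-algebra: a Boolean algebra in which every countable subset
(equivalently, every `ℕ`-indexed sequence) has a supremum. -/
class BooleanSigmaAlgebra (α : Type u) extends BooleanAlgebra α where
  seqSup : (ℕ → α) → α
  le_seqSup : ∀ (f : ℕ → α) (n : ℕ), f n ≤ seqSup f
  seqSup_le : ∀ (f : ℕ → α) (b : α), (∀ n, f n ≤ b) → seqSup f ≤ b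

namespace BooleanSigmaAlgebra

variable {α : Type u} [BooleanSigmaAlgebra α]

/-- Countable infimum, derived from countable suprema via complements. -/
def seqInf (f : ℕ → α) : α := (seqSup fun n => (f n)ᶜ)ᶜ

/-- `limsup_n a_n = ⋀_n ⋁_{k ≥ n} a_k`. -/
def blimsup (f : ℕ → α) : α := seqInf fun n => seqSup fun k => f (n + k)

/-- `liminf_n a_n = ⋁_n ⋀_{k ≥ n} a_k`. -/
def bliminf (f : ℕ → α) : α := seqSup fun n => seqInf fun k => f (n + k)

/-- The sequence `a_n` converges to `0`, i.e. `limsup_n a_n = 0` (which is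
equivalent to `lim_n a_n = 0`). -/
def TendstoBot (f : ℕ → α) : Prop := blimsup f = ⊥

/-- The sequence `a_n` converges to `1`, i.e. `liminf_n a_n = 1` (which is
equivalent to `lim_n a_n = 1`). -/
def TendstoTop (f : ℕ → α) : Prop := bliminf f = ⊤

/-- An antichain: a set of nonzero pairwise disjoint elements. -/
def IsAC (A : Set α) : Prop := ⊥ ∉ A ∧ A.Pairwise fun a b => a ⊓ b = ⊥

/-- A maximal antichain: an antichain such that every nonzero element meets
some member of it. -/
def IsMaxAC (W : Set α) : Prop := IsAC W ∧ ∀ b : α, b ≠ ⊥ → ∃ w ∈ W, w ⊓ b ≠ ⊥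

/-- A countable maximal antichain. -/
def IsCMA (W : Set α) : Prop := W.Countable ∧ IsMaxAC W

/-- `B` is weakly distributive: every sequence `{W_n}` of countable maximal
antichains admits finite subsets `E_n ⊆ W_n` with `lim_n ⋁E_n = 1`. -/
def WeaklyDistributive (α : Type u) [BooleanSigmaAlgebra α] : Prop :=
  ∀ W : ℕ → Set α, (∀ n, IsCMA (W n)) →
    ∃ E : ℕ → Finset α, (∀ n, ↑(E n) ⊆ W n) ∧ TendstoTop fun n => (E n).sup id

/-- `B` is uniformly weakly distributive: there are functions `F_n` assigning
to each countable maximal antichain `W` a finite subset `F_n(W) ⊆ W` such that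
for every sequence `{W_n}` of countable maximal antichains,
`lim_n ⋁F_n(W_n) = 1`. -/
def UniformlyWeaklyDistributive (α : Type u) [BooleanSigmaAlgebra α] : Prop :=
  ∃ F : ℕ → Set α → Finset α,
    (∀ (n : ℕ) (W : Set α), IsCMA W → ↑(F n W) ⊆ W) ∧
    ∀ W : ℕ → Set α, (∀ n, IsCMA (W n)) → TendstoTop fun n => (F n (W n)).sup id

/-- `B` is uniformly concentrated: there is a function `F` assigning to each
finite antichain `A` an element `F(A) ∈ A` such that for every sequence `{A_n}`
of finite antichains with `|A_n| ≥ 2^n`, `lim_n F(A_n) = 0`. -/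
def UniformlyConcentrated (α : Type u) [BooleanSigmaAlgebra α] : Prop :=
  ∃ F : Finset α → α,
    (∀ A : Finset α, A.Nonempty → IsAC (↑A : Set α) → F A ∈ A) ∧
    ∀ A : ℕ → Finset α, (∀ n, IsAC (↑(A n) : Set α) ∧ 2 ^ n ≤ (A n).card) →
      TendstoBot fun n => F (A n)

/-- `B` is concentrated: for every sequence `{A_n}` of finite antichains with
`|A_n| ≥ 2^n` there are `a_n ∈ A_n` with `lim_n a_n = 0`. -/
def Concentrated (α : Type u) [BooleanSigmaAlgebra α] : Prop :=
  ∀ A : ℕ → Finset α, (∀ n, IsAC (↑(A n) : Set α) ∧ 2 ^ n ≤ (A n).card) →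
    ∃ a : ℕ → α, (∀ n, a n ∈ A n) ∧ TendstoBot a

/-- A strictly positive finitely additive (probability) measure on `B`. -/
structure IsFinAddMeasure (m : α → ℝ) : Prop where
  map_bot : m ⊥ = 0
  pos : ∀ a : α, a ≠ ⊥ → 0 < m a
  map_top : m ⊤ = 1
  mono : ∀ a b : α, a ≤ b → m a ≤ m b
  add : ∀ a b : α, a ⊓ b = ⊥ → m (a ⊔ b) = m a + m b

/-- A (strictly positive, σ-additive, probability) measure on `B`. -/
structure IsMeasure (m : α → ℝ) extends IsFinAddMeasure m : Prop where
  sigma_add : ∀ f : ℕ → α, (∀ i j : ℕ, i ≠ j → f i ⊓ f j = ⊥) →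
    HasSum (fun n => m (f n)) (m (seqSup f))

/-- A measure algebra: a Boolean σ-algebra carrying a measure. -/
def IsMeasureAlgebra (α : Type u) [BooleanSigmaAlgebra α] : Prop :=
  ∃ m : α → ℝ, IsMeasure m

/-- A fragmentation of `B`: an increasing sequence of upward closed subsets of
`B ∖ {0}` whose union is `B ∖ {0}`. -/
structure IsFragmentation (C : ℕ → Set α) : Prop where
  mono : ∀ n, C n ⊆ C (n + 1)
  not_bot : ∀ n, ⊥ ∉ C n
  upward : ∀ (n : ℕ) (a b : α), a ∈ C n → a ≤ b → b ∈ C n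
  covers : ∀ a : α, a ≠ ⊥ → ∃ n, a ∈ C n

/-- A fragmentation is tight if `a_n ∉ C_n` for all `n` implies `lim_n a_n = 0`. -/
def Tight (C : ℕ → Set α) : Prop :=
  ∀ a : ℕ → α, (∀ n, a n ∉ C n) → TendstoBot a

/-- A fragmentation is σ-bounded cc if for every `n` there is a bound `K_n` on
the size of antichains contained in `C_n`. -/
def SigmaBoundedCC (C : ℕ → Set α) : Prop :=
  ∀ n : ℕ, ∃ K : ℕ, ∀ A : Set α, A ⊆ C n → IsAC A → A.Finite ∧ A.ncard ≤ K

/-- A fragmentation is σ-finite cc if every antichain contained in some `C_n`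
is finite. -/
def SigmaFiniteCC (C : ℕ → Set α) : Prop :=
  ∀ n : ℕ, ∀ A : Set α, A ⊆ C n → IsAC A → A.Finite

/-- A fragmentation is `G_δ` if for every `n` no sequence of elements of `C_n`
converges to `0`. -/
def GDelta (C : ℕ → Set α) : Prop :=
  ∀ (n : ℕ) (a : ℕ → α), (∀ k, a k ∈ C n) → ¬ TendstoBot a

/-- A fragmentation is graded if `a ⊔ b ∈ C_n` implies `a ∈ C_{n+1}` or
`b ∈ C_{n+1}`. -/
def Graded (C : ℕ → Set α) : Prop :=
  ∀ (n : ℕ) (a b : α), a ⊔ b ∈ C n → a ∈ C (n + 1) ∨ b ∈ C (n + 1)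

end BooleanSigmaAlgebra

open BooleanSigmaAlgebra

namespace BooleanSigmaAlgebra

variable {α : Type u} [BooleanSigmaAlgebra α]

theorem seqSup_mono' {f g : ℕ → α} (h : ∀ n, f n ≤ g n) : seqSup f ≤ seqSup g :=
  seqSup_le _ _ fun n => (h n).trans (le_seqSup g n)

theorem seqInf_le' (f : ℕ → α) (n : ℕ) : seqInf f ≤ f n := by
  have h := le_seqSup (fun n => (f n)ᶜ) n
  calc seqInf f ≤ ((f n)ᶜ)ᶜ := compl_le_compl h
  _ = f n := compl_compl _

theorem le_seqInf' (f : ℕ → α) (b : α) (h : ∀ n, b ≤ f n) : b ≤ seqInf f := by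
  have h2 : seqSup (fun n => (f n)ᶜ) ≤ bᶜ := seqSup_le _ _ fun n => compl_le_compl (h n)
  calc b = bᶜᶜ := (compl_compl b).symm
  _ ≤ seqInf f := compl_le_compl h2

theorem seqInf_mono' {f g : ℕ → α} (h : ∀ n, f n ≤ g n) : seqInf f ≤ seqInf g :=
  le_seqInf' _ _ fun n => (seqInf_le' f n).trans (h n)

theorem compl_seqInf' (f : ℕ → α) : (seqInf f)ᶜ = seqSup fun n => (f n)ᶜ := by
  rw [seqInf, compl_compl]

theorem inf_seqSup' (x : α) (f : ℕ → α) : x ⊓ seqSup f = seqSup fun n => x ⊓ f n := by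
  apply le_antisymm
  · have h : seqSup f ≤ (seqSup fun n => x ⊓ f n) ⊔ xᶜ := seqSup_le _ _ fun n => by
      calc f n = (f n ⊓ x) ⊔ (f n ⊓ xᶜ) := by rw [← inf_sup_left, sup_compl_eq_top, inf_top_eq]
      _ ≤ (seqSup fun n => x ⊓ f n) ⊔ xᶜ :=
        sup_le_sup (by rw [inf_comm (f n) x]; exact le_seqSup (fun n => x ⊓ f n) n) inf_le_right
    calc x ⊓ seqSup f ≤ x ⊓ ((seqSup fun n => x ⊓ f n) ⊔ xᶜ) := inf_le_inf_left x h
    _ = (x ⊓ seqSup fun n => x ⊓ f n) ⊔ (x ⊓ xᶜ) := inf_sup_left _ _ _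
    _ ≤ _ := by rw [inf_compl_eq_bot, sup_bot_eq]; exact inf_le_right
  · exact seqSup_le _ _ fun n => inf_le_inf_left x (le_seqSup f n)

theorem tailSup_antitone' (f : ℕ → α) {N M : ℕ} (h : N ≤ M) :
    (seqSup fun k => f (M + k)) ≤ seqSup fun k => f (N + k) :=
  seqSup_le _ _ fun k => by
    have he : M + k = N + ((M - N) + k) := by omega
    rw [he]; exact le_seqSup (fun k => f (N + k)) _

theorem blimsup_mono' {f g : ℕ → α} (h : ∀ n, f n ≤ g n) : blimsup f ≤ blimsup g :=
  le_seqInf' _ _ fun n => (seqInf_le' _ n).trans (seqSup_mono' fun k => h (n + k))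

theorem blimsup_bot' : blimsup (fun _ => (⊥ : α)) = ⊥ := by
  apply le_antisymm _ bot_le
  exact (seqInf_le' _ 0).trans (seqSup_le _ _ fun _ => le_rfl)

theorem blimsup_sup_le' (f g : ℕ → α) :
    blimsup (fun n => f n ⊔ g n) ≤ blimsup f ⊔ blimsup g := by
  have hstep : ∀ N : ℕ, (seqSup fun k => f (N + k) ⊔ g (N + k)) ≤
      (seqSup fun k => f (N + k)) ⊔ (seqSup fun k => g (N + k)) := fun N =>
    seqSup_le _ _ fun k =>
      sup_le_sup (le_seqSup (fun k => f (N + k)) k) (le_seqSup (fun k => g (N + k)) k)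
  have h1 : blimsup (fun n => f n ⊔ g n) ≤
      seqInf fun N => (seqSup fun k => f (N + k)) ⊔ (seqSup fun k => g (N + k)) :=
    le_seqInf' _ _ fun N => (seqInf_le' _ N).trans (hstep N)
  refine h1.trans ?_
  have ht : (seqInf fun N => (seqSup fun k => f (N + k)) ⊔ (seqSup fun k => g (N + k))) ⊓
      (seqInf fun N => seqSup fun k => g (N + k))ᶜ ≤ seqInf fun N => seqSup fun k => f (N + k) := by
    rw [compl_seqInf', inf_seqSup']
    apply seqSup_le
    intro N
    apply le_seqInf'
    intro m
    calc (seqInf fun N => (seqSup fun k => f (N + k)) ⊔ (seqSup fun k => g (N + k))) ⊓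
          (seqSup fun k => g (N + k))ᶜ
        ≤ ((seqSup fun k => f (max N m + k)) ⊔ (seqSup fun k => g (max N m + k))) ⊓
          (seqSup fun k => g (max N m + k))ᶜ :=
          inf_le_inf (seqInf_le' _ (max N m))
            (compl_le_compl (tailSup_antitone' g (le_max_left _ _)))
    _ = ((seqSup fun k => f (max N m + k)) ⊓ (seqSup fun k => g (max N m + k))ᶜ) ⊔
        ((seqSup fun k => g (max N m + k)) ⊓ (seqSup fun k => g (max N m + k))ᶜ) :=
          inf_sup_right _ _ _
    _ ≤ seqSup fun k => f (max N m + k) := by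
          rw [inf_compl_eq_bot, sup_bot_eq]; exact inf_le_left
    _ ≤ seqSup fun k => f (m + k) := tailSup_antitone' f (le_max_right _ _)
  calc (seqInf fun N => (seqSup fun k => f (N + k)) ⊔ (seqSup fun k => g (N + k)))
      = ((seqInf fun N => (seqSup fun k => f (N + k)) ⊔ (seqSup fun k => g (N + k))) ⊓
          (seqInf fun N => seqSup fun k => g (N + k))) ⊔
        ((seqInf fun N => (seqSup fun k => f (N + k)) ⊔ (seqSup fun k => g (N + k))) ⊓
          (seqInf fun N => seqSup fun k => g (N + k))ᶜ) := by
        rw [← inf_sup_left, sup_compl_eq_top, inf_top_eq]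
  _ ≤ blimsup f ⊔ blimsup g := by
      rw [sup_comm (blimsup f) (blimsup g)]
      exact sup_le_sup inf_le_right ht

theorem blimsup_inf_bliminf_le' (f g : ℕ → α) :
    blimsup f ⊓ bliminf g ≤ blimsup fun n => f n ⊓ g n := by
  rw [bliminf, inf_seqSup']
  apply seqSup_le
  intro N
  apply le_seqInf'
  intro M
  set j := max M N with hj
  have h1 : blimsup f ≤ seqSup fun k => f (j + k) := seqInf_le' _ j
  have h2 : ∀ k, (seqInf fun k => g (N + k)) ≤ g (j + k) := by
    intro k
    have he : j + k = N + ((j - N) + k) := by omega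
    rw [he]; exact seqInf_le' _ _
  calc blimsup f ⊓ seqInf (fun k => g (N + k))
      ≤ (seqSup fun k => f (j + k)) ⊓ seqInf (fun k => g (N + k)) := inf_le_inf_right _ h1
  _ = seqSup fun k => (seqInf fun k => g (N + k)) ⊓ f (j + k) := by
      rw [inf_comm, inf_seqSup']
  _ ≤ seqSup fun k => f (j + k) ⊓ g (j + k) := seqSup_mono' fun k => by
      rw [inf_comm]; exact inf_le_inf_left _ (h2 k)
  _ ≤ seqSup fun k => f (M + k) ⊓ g (M + k) :=
      tailSup_antitone' (fun n => f n ⊓ g n) (le_max_left _ _)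

theorem blimsup_compl' (f : ℕ → α) : blimsup (fun n => (f n)ᶜ) = (bliminf f)ᶜ := by
  simp only [blimsup, bliminf, seqInf, compl_compl]

theorem tendstoTop_iff_compl' (f : ℕ → α) :
    TendstoTop f ↔ blimsup (fun n => (f n)ᶜ) = ⊥ := by
  rw [TendstoTop, blimsup_compl', compl_eq_bot]

end BooleanSigmaAlgebra

/-- If a Boolean σ-algebra `B` is weakly distributive and has a tight σ-finite
cc fragmentation, then `B` is uniformly weakly distributive. -/
theorem weaklyDistributive_tight_sigmaFiniteCC_imp_uniformlyWeaklyDistributive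
    (α : Type u) [BooleanSigmaAlgebra α] (hwd : WeaklyDistributive α)
    (C : ℕ → Set α) (hC : IsFragmentation C) (ht : Tight C)
    (hcc : SigmaFiniteCC C) :
    UniformlyWeaklyDistributive α := by
  classical
  have Cmono : ∀ {i j : ℕ}, i ≤ j → C i ⊆ C j := by
    intro i j h
    induction h with
    | refl => exact subset_rfl
    | step _ ih => exact ih.trans (hC.mono _)
  -- Key existence: choice of a level k ≥ n for each CMA W such that all
  -- "tail differences" above k avoid C n.
  have key : ∀ (n : ℕ) (W : Set α), ∃ s : Finset α,
      IsCMA W → ((↑s : Set α) ⊆ W ∧ ∃ k, n ≤ k ∧ (↑s : Set α) = W ∩ C k ∧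
        ∀ M, k ≤ M → ∀ t : Finset α, (↑t : Set α) = W ∩ C M →
          ((s.sup id)ᶜ ⊓ t.sup id) ∉ C n) := by
    intro n W
    by_cases hW : IsCMA W
    swap
    · exact ⟨∅, fun h => absurd h hW⟩
    have hbot : ⊥ ∉ W := hW.2.1.1
    have hpw := hW.2.1.2
    have hfin : ∀ j : ℕ, (W ∩ C j).Finite := fun j =>
      hcc j _ Set.inter_subset_right
        ⟨fun h => hbot h.1, hpw.mono Set.inter_subset_left⟩
    have Ymono : ∀ {i j : ℕ}, i ≤ j →
        (hfin i).toFinset.sup id ≤ (hfin j).toFinset.sup id := by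
      intro i j h
      apply Finset.sup_mono
      rw [Set.Finite.toFinset_subset_toFinset]
      exact Set.inter_subset_inter subset_rfl (Cmono h)
    have hexists : ∃ k, n ≤ k ∧ ∀ M, k ≤ M →
        (((hfin k).toFinset.sup id)ᶜ ⊓ (hfin M).toFinset.sup id) ∉ C n := by
      by_contra hcon
      push_neg at hcon
      choose M hM1 hM2 using hcon
      set step : ℕ → ℕ := fun p => if h : n ≤ p then M p h else p with hstep
      set g : ℕ → ℕ := fun i => step^[i] n with hg
      have hgsucc0 : ∀ i, g (i + 1) = step (g i) := fun i =>
        Function.iterate_succ_apply' step i n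
      have hgn : ∀ i, n ≤ g i := by
        intro i
        induction i with
        | zero => simp [hg]
        | succ i ih =>
          rw [hgsucc0 i, hstep]
          simp only [dif_pos ih]
          exact ih.trans (hM1 _ ih)
      have hgsucc : ∀ i, g (i + 1) = M (g i) (hgn i) := by
        intro i
        rw [hgsucc0 i, hstep]
        simp only [dif_pos (hgn i)]
      have hgmono : ∀ i, g i ≤ g (i + 1) := fun i => by
        rw [hgsucc i]; exact hM1 _ _
      have hgle : ∀ {i j : ℕ}, i ≤ j → g i ≤ g j := by
        intro i j h
        induction h with
        | refl => exact le_rfl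
        | step _ ih => exact ih.trans (hgmono _)
      set d : ℕ → α := fun i =>
        (((hfin (g i)).toFinset.sup id)ᶜ ⊓ (hfin (g (i + 1))).toFinset.sup id) with hd
      have hdC : ∀ i, d i ∈ C n := by
        intro i
        have h2 := hM2 (g i) (hgn i)
        rw [hd]
        simp only []
        rw [hgsucc i]
        exact h2
      have hdd : ∀ i j, i < j → d i ⊓ d j = ⊥ := by
        intro i j hij
        apply le_bot_iff.mp
        have h1 : d i ≤ (hfin (g (i + 1))).toFinset.sup id := inf_le_right
        have h2 : d j ≤ ((hfin (g (i + 1))).toFinset.sup id)ᶜ :=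
          le_trans inf_le_left (compl_le_compl (Ymono (hgle hij)))
        calc d i ⊓ d j ≤ (hfin (g (i + 1))).toFinset.sup id ⊓
            ((hfin (g (i + 1))).toFinset.sup id)ᶜ := inf_le_inf h1 h2
        _ = ⊥ := inf_compl_eq_bot
      have hdne : ∀ i, d i ≠ ⊥ := fun i h => hC.not_bot n (h ▸ hdC i)
      have hinj : Function.Injective d := by
        intro i j hij
        by_contra hne
        rcases Nat.lt_or_ge i j with h | h
        · exact hdne i (by rw [← hdd i j h, hij, inf_idem])
        · have h' : j < i := lt_of_le_of_ne h (Ne.symm hne)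
          exact hdne j (by rw [← hdd j i h', ← hij, inf_idem])
      have hfinite : (Set.range d).Finite := by
        apply hcc n _ (by rintro x ⟨i, rfl⟩; exact hdC i)
        constructor
        · rintro ⟨i, hi⟩
          exact hdne i hi
        · rintro a ⟨i, rfl⟩ b ⟨j, rfl⟩ hab
          have hij : i ≠ j := fun h => hab (by rw [h])
          rcases Nat.lt_or_ge i j with h | h
          · exact hdd i j h
          · rw [inf_comm]
            exact hdd j i (lt_of_le_of_ne h (Ne.symm hij))
      exact (Set.infinite_range_of_injective hinj) hfinite
    obtain ⟨k, hnk, htail⟩ := hexists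
    refine ⟨(hfin k).toFinset, fun _ => ⟨?_, k, hnk, Set.Finite.coe_toFinset _, ?_⟩⟩
    · rw [Set.Finite.coe_toFinset]; exact Set.inter_subset_left
    · intro M hkM t htcoe
      have hteq : t = (hfin M).toFinset :=
        Finset.coe_injective (by rw [htcoe, Set.Finite.coe_toFinset])
      rw [hteq]
      exact htail M hkM
  choose F hF using key
  refine ⟨F, fun n W hW => (hF n W hW).1, ?_⟩
  intro W hWall
  have H : ∀ n, ∃ k, n ≤ k ∧ (↑(F n (W n)) : Set α) = W n ∩ C k ∧
      ∀ M, k ≤ M → ∀ t : Finset α, (↑t : Set α) = W n ∩ C M →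
        (((F n (W n)).sup id)ᶜ ⊓ t.sup id) ∉ C n := fun n => (hF n (W n) (hWall n)).2
  choose k hkn hFk htail using H
  obtain ⟨E, hEsub, hEtop⟩ := hwd W hWall
  have hlev : ∀ n, ∃ m, k n ≤ m ∧ ∀ w ∈ E n, w ∈ C m := by
    intro n
    have hwne : ∀ w : α, ∃ mw, w ∈ E n → w ∈ C mw := by
      intro w
      by_cases hw : w ∈ E n
      · have hwW : w ∈ W n := hEsub n hw
        have hwb : w ≠ ⊥ := fun h => (hWall n).2.1.1 (h ▸ hwW)
        obtain ⟨mw, hmw⟩ := hC.covers w hwb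
        exact ⟨mw, fun _ => hmw⟩
      · exact ⟨0, fun h => absurd h hw⟩
    choose lvl hlvl using hwne
    refine ⟨max (k n) ((E n).sup lvl), le_max_left _ _, fun w hw => ?_⟩
    exact Cmono (le_trans (Finset.le_sup hw) (le_max_right _ _)) (hlvl w hw)
  choose m hkm hEC using hlev
  have hfinWn : ∀ n, (W n ∩ C (m n)).Finite := fun n =>
    hcc (m n) _ Set.inter_subset_right
      ⟨fun h => (hWall n).2.1.1 h.1, (hWall n).2.1.2.mono Set.inter_subset_left⟩
  set ζ : ℕ → α := fun n => (((F n (W n)).sup id)ᶜ : α) with hζ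
  set Yb : ℕ → α := fun n => (hfinWn n).toFinset.sup id with hYb
  set dd : ℕ → α := fun n => ζ n ⊓ Yb n with hdddef
  set ss : ℕ → α := fun n => (Yb n)ᶜ with hssdef
  set e : ℕ → α := fun n => (E n).sup id with he
  have hdnot : ∀ n, dd n ∉ C n := fun n =>
    htail n (m n) (hkm n) ((hfinWn n).toFinset) (Set.Finite.coe_toFinset _)
  have heY : ∀ n, e n ≤ Yb n := by
    intro n
    apply Finset.sup_le
    intro w hw
    have hwmem : w ∈ (hfinWn n).toFinset := by
      rw [Set.Finite.mem_toFinset]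
      exact ⟨hEsub n hw, hEC n w hw⟩
    exact Finset.le_sup hwmem
  have hse : ∀ n, ss n ⊓ e n = ⊥ := by
    intro n
    apply le_bot_iff.mp
    calc ss n ⊓ e n ≤ (Yb n)ᶜ ⊓ Yb n := inf_le_inf_left _ (heY n)
    _ = ⊥ := compl_inf_eq_bot
  have hζle : ∀ n, ζ n ≤ dd n ⊔ ss n := by
    intro n
    calc ζ n = ζ n ⊓ (Yb n ⊔ (Yb n)ᶜ) := by rw [sup_compl_eq_top, inf_top_eq]
    _ = (ζ n ⊓ Yb n) ⊔ (ζ n ⊓ (Yb n)ᶜ) := inf_sup_left _ _ _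
    _ ≤ dd n ⊔ ss n := sup_le_sup le_rfl inf_le_right
  have hgoal : blimsup ζ = ⊥ := by
    apply le_bot_iff.mp
    calc blimsup ζ ≤ blimsup (fun n => dd n ⊔ ss n) := blimsup_mono' hζle
    _ ≤ blimsup dd ⊔ blimsup ss := blimsup_sup_le' _ _
    _ ≤ ⊥ := by
        have h1 : blimsup dd = ⊥ := ht dd hdnot
        have h2 : blimsup ss = ⊥ := by
          have h3 : bliminf e = ⊤ := hEtop
          apply le_bot_iff.mp
          calc blimsup ss = blimsup ss ⊓ bliminf e := by rw [h3, inf_top_eq]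
          _ ≤ blimsup (fun n => ss n ⊓ e n) := blimsup_inf_bliminf_le' _ _
          _ = ⊥ := by
              rw [show (fun n => ss n ⊓ e n) = fun _ => (⊥ : α) from funext hse]
              exact blimsup_bot'
        rw [h1, h2, sup_idem]
  show TendstoTop fun n => (F n (W n)).sup id
  rw [tendstoTop_iff_compl']
  exact hgoal
end

section
/- Every weakly distributive, uniformly concentrated Boolean σ-algebra is uniformly weakly distributive. -/
universe u

open BooleanSigmaAlgebra

section Aux
variable {α : Type u} [BooleanSigmaAlgebra α]

lemma auxSeqSupMono {f g : ℕ → α} (h : ∀ n, f n ≤ g n) : seqSup f ≤ seqSup g :=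
  seqSup_le _ _ fun n => (h n).trans (le_seqSup g n)

lemma auxComplSeqInf (f : ℕ → α) : (seqInf f)ᶜ = seqSup fun n => (f n)ᶜ := by
  simp [seqInf]

lemma auxSeqInfLe (f : ℕ → α) (n : ℕ) : seqInf f ≤ f n := by
  have h := le_seqSup (fun n => (f n)ᶜ) n
  calc seqInf f ≤ ((f n)ᶜ)ᶜ := compl_le_compl h
    _ = f n := compl_compl _

lemma auxLeOfInfComplEqBot {x y : α} (h : x ⊓ yᶜ = ⊥) : x ≤ y := by
  have hx : x = x ⊓ y := by
    calc x = x ⊓ (y ⊔ yᶜ) := by rw [sup_compl_eq_top, inf_top_eq]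
    _ = x ⊓ y ⊔ x ⊓ yᶜ := inf_sup_left _ _ _
    _ = x ⊓ y := by rw [h, sup_bot_eq]
  exact hx.le.trans inf_le_right

lemma auxLeComplOfInf {x y : α} (h : x ⊓ y = ⊥) : y ≤ xᶜ := by
  apply auxLeOfInfComplEqBot
  rw [compl_compl]
  rw [inf_comm] at h
  exact h

lemma auxInfSeqSup (a : α) (f : ℕ → α) : a ⊓ seqSup f = seqSup fun n => a ⊓ f n := by
  apply le_antisymm
  · set c := seqSup fun n => a ⊓ f n with hc
    have h1 : ∀ n, f n ≤ c ⊔ aᶜ := by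
      intro n
      have : f n = a ⊓ f n ⊔ aᶜ ⊓ f n := by
        rw [← inf_sup_right, sup_compl_eq_top, top_inf_eq]
      rw [this]
      exact sup_le_sup (le_seqSup (fun n => a ⊓ f n) n) inf_le_left
    have h2 : seqSup f ≤ c ⊔ aᶜ := seqSup_le _ _ h1
    calc a ⊓ seqSup f ≤ a ⊓ (c ⊔ aᶜ) := inf_le_inf_left _ h2
      _ = a ⊓ c ⊔ a ⊓ aᶜ := inf_sup_left _ _ _
      _ ≤ c := by rw [inf_compl_eq_bot, sup_bot_eq]; exact inf_le_right
  · exact seqSup_le _ _ fun n => inf_le_inf_left _ (le_seqSup f n)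

lemma auxSeqSupBot : seqSup (fun _ => (⊥ : α)) = ⊥ :=
  le_antisymm (seqSup_le _ _ fun _ => le_rfl) (le_seqSup (fun _ => (⊥ : α)) 0)

lemma auxSeqSupInf (f : ℕ → α) (a : α) : seqSup f ⊓ a = seqSup fun n => f n ⊓ a := by
  rw [inf_comm, auxInfSeqSup]
  exact congrArg _ (funext fun n => inf_comm _ _)

lemma auxBlimsupMono {f g : ℕ → α} (h : ∀ n, f n ≤ g n) : blimsup f ≤ blimsup g := by
  unfold blimsup seqInf
  apply compl_le_compl
  apply auxSeqSupMono
  intro n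
  apply compl_le_compl
  exact auxSeqSupMono fun k => h (n + k)

lemma auxBlimsupLeTail (f : ℕ → α) (n : ℕ) : blimsup f ≤ seqSup fun k => f (n + k) :=
  auxSeqInfLe _ n

lemma auxTailAnti (f : ℕ → α) {m n : ℕ} (h : m ≤ n) :
    (seqSup fun k => f (n + k)) ≤ seqSup fun k => f (m + k) := by
  apply seqSup_le
  intro k
  have harith : n + k = m + (n - m + k) := by omega
  rw [harith]
  exact le_seqSup (fun k => f (m + k)) (n - m + k)

lemma auxBlimsupSup (f g : ℕ → α) :
    blimsup (fun k => f k ⊔ g k) ≤ blimsup f ⊔ blimsup g := by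
  apply auxLeOfInfComplEqBot
  rw [compl_sup]
  set L := blimsup fun k => f k ⊔ g k with hL
  have hf : (blimsup f)ᶜ = seqSup fun n => (seqSup fun k => f (n + k))ᶜ := auxComplSeqInf _
  have hg : (blimsup g)ᶜ = seqSup fun n => (seqSup fun k => g (n + k))ᶜ := auxComplSeqInf _
  rw [hf, hg]
  have key : ∀ n m : ℕ,
      L ⊓ (seqSup fun k => f (n + k))ᶜ ⊓ (seqSup fun k => g (m + k))ᶜ = ⊥ := by
    intro n m
    set p := max n m with hp
    have h1 : L ≤ (seqSup fun k => f (n + k)) ⊔ (seqSup fun k => g (m + k)) := by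
      have h2 : L ≤ seqSup fun k => f k ⊔ g k := by
        have := auxBlimsupLeTail (fun k => f k ⊔ g k) 0
        simpa using this
      -- use tail at p
      have h3 : L ≤ seqSup fun k => f (p + k) ⊔ g (p + k) := auxBlimsupLeTail _ p
      have h4 : (seqSup fun k => f (p + k) ⊔ g (p + k)) ≤
          (seqSup fun k => f (p + k)) ⊔ (seqSup fun k => g (p + k)) := by
        apply seqSup_le
        intro k
        exact sup_le_sup (le_seqSup (fun k => f (p + k)) k) (le_seqSup (fun k => g (p + k)) k)
      have h5 : (seqSup fun k => f (p + k)) ≤ seqSup fun k => f (n + k) :=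
        auxTailAnti f (le_max_left n m)
      have h6 : (seqSup fun k => g (p + k)) ≤ seqSup fun k => g (m + k) :=
        auxTailAnti g (le_max_right n m)
      exact h3.trans (h4.trans (sup_le_sup h5 h6))
    set X := seqSup fun k => f (n + k)
    set Y := seqSup fun k => g (m + k)
    have : L ⊓ Xᶜ ⊓ Yᶜ ≤ (X ⊔ Y) ⊓ (X ⊔ Y)ᶜ := by
      rw [compl_sup, ← inf_assoc]
      exact inf_le_inf (inf_le_inf h1 le_rfl) le_rfl
    rw [inf_compl_eq_bot] at this
    exact le_bot_iff.mp this
  set Φ : ℕ → α := fun n => (seqSup fun k => f (n + k))ᶜ with hΦ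
  set Ψ : ℕ → α := fun m => (seqSup fun k => g (m + k))ᶜ with hΨ
  have key2 : ∀ m, (L ⊓ Ψ m) ⊓ seqSup Φ = ⊥ := by
    intro m
    rw [auxInfSeqSup (L ⊓ Ψ m) Φ]
    apply le_bot_iff.mp
    apply seqSup_le
    intro n
    refine le_of_eq ?_
    rw [inf_right_comm]
    exact key n m
  calc L ⊓ (seqSup Φ ⊓ seqSup Ψ) = (L ⊓ seqSup Ψ) ⊓ seqSup Φ := by
        rw [inf_comm (seqSup Φ) (seqSup Ψ), ← inf_assoc]
    _ = (seqSup fun m => L ⊓ Ψ m) ⊓ seqSup Φ := by rw [auxInfSeqSup L Ψ]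
    _ = seqSup fun m => (L ⊓ Ψ m) ⊓ seqSup Φ := auxSeqSupInf _ _
    _ = seqSup fun _ => (⊥ : α) := congrArg _ (funext key2)
    _ = ⊥ := auxSeqSupBot

lemma auxBlimsupCompl (b : ℕ → α) : blimsup (fun k => (b k)ᶜ) = (bliminf b)ᶜ := by
  have e1 : ∀ n : ℕ, (seqSup fun k => (b (n + k))ᶜ) = (seqInf fun k => b (n + k))ᶜ :=
    fun n => (auxComplSeqInf _).symm
  show (seqInf fun n => seqSup fun k => (b (n + k))ᶜ)
      = (seqSup fun n => seqInf fun k => b (n + k))ᶜ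
  simp only [e1]
  conv_lhs => rw [seqInf]
  simp only [compl_compl]

lemma auxTendstoTopIff (b : ℕ → α) : TendstoTop b ↔ blimsup (fun k => (b k)ᶜ) = ⊥ := by
  rw [auxBlimsupCompl, TendstoTop, compl_eq_bot]

lemma auxBlimsupEventuallyBot (f : ℕ → α) (K : ℕ) (h : ∀ k, K ≤ k → f k = ⊥) :
    blimsup f = ⊥ := by
  apply le_bot_iff.mp
  calc blimsup f ≤ seqSup fun k => f (K + k) := auxBlimsupLeTail f K
    _ ≤ ⊥ := seqSup_le _ _ fun k => le_of_eq (h (K + k) (Nat.le_add_right _ _))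

lemma auxFinsetSupInf (S T : Finset ℕ) (w : ℕ → α)
    (h : ∀ a ∈ S, ∀ b ∈ T, w a ⊓ w b = ⊥) : S.sup w ⊓ T.sup w = ⊥ := by
  have h1 : S.sup w ≤ (T.sup w)ᶜ := by
    refine Finset.sup_le fun a ha => ?_
    have h2 : T.sup w ≤ (w a)ᶜ := Finset.sup_le fun b hb => auxLeComplOfInf (h a ha b hb)
    have h3 : T.sup w ⊓ w a ≤ (w a)ᶜ ⊓ w a := inf_le_inf h2 le_rfl
    have h4 : ((w a)ᶜ : α) ⊓ w a = ⊥ := by rw [inf_comm]; exact inf_compl_eq_bot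
    rw [h4] at h3
    exact auxLeComplOfInf (le_bot_iff.mp h3)
  have h5 : S.sup w ⊓ T.sup w ≤ (T.sup w)ᶜ ⊓ T.sup w := inf_le_inf h1 le_rfl
  have h6 : ((T.sup w)ᶜ : α) ⊓ T.sup w = ⊥ := by rw [inf_comm]; exact inf_compl_eq_bot
  rw [h6] at h5
  exact le_bot_iff.mp h5

lemma auxMkAC [DecidableEq α] (u : ℕ → α) (s : ℕ)
    (hne : ∀ i, i < s → u i ≠ ⊥)
    (hdisj : ∀ i j, i < s → j < s → i ≠ j → u i ⊓ u j = ⊥) :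
    IsAC (↑((Finset.range s).image u) : Set α) ∧ ((Finset.range s).image u).card = s := by
  classical
  constructor
  · constructor
    · intro hmem
      rw [Finset.mem_coe, Finset.mem_image] at hmem
      obtain ⟨i, hi, hui⟩ := hmem
      exact hne i (Finset.mem_range.mp hi) hui
    · intro x hx y hy hxy
      rw [Finset.mem_coe, Finset.mem_image] at hx hy
      obtain ⟨i, hi, hui⟩ := hx
      obtain ⟨j, hj, huj⟩ := hy
      have hij : i ≠ j := by rintro rfl; exact hxy (hui ▸ huj ▸ rfl)
      rw [← hui, ← huj]
      exact hdisj i j (Finset.mem_range.mp hi) (Finset.mem_range.mp hj) hij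
  · rw [Finset.card_image_of_injOn, Finset.card_range]
    intro i hi j hj hij
    by_contra hne'
    have h1 := hdisj i j (by simpa using hi) (by simpa using hj) hne'
    rw [hij, inf_idem] at h1
    exact hne j (by simpa using hj) h1

lemma auxEnum {W : Set α} (hc : W.Countable) (hi : W.Infinite) :
    ∃ w : ℕ → α, Function.Injective w ∧ (∀ j, w j ∈ W) ∧ ∀ x ∈ W, ∃ j, w j = x := by
  haveI := hc.to_subtype
  haveI := hi.to_subtype
  obtain ⟨d⟩ := nonempty_denumerable ↥W
  refine ⟨fun j => ((Denumerable.eqv ↥W).symm j : α), ?_, ?_, ?_⟩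
  · intro i j hij
    exact (Denumerable.eqv ↥W).symm.injective (Subtype.coe_injective hij)
  · exact fun j => ((Denumerable.eqv ↥W).symm j).2
  · intro x hx
    exact ⟨Denumerable.eqv ↥W ⟨x, hx⟩, by simp⟩

lemma auxChunk [DecidableEq α] (w : ℕ → α) (m : ℕ) (T : Finset α)
    (hT : ∀ x ∈ T, ∃ j, m ≤ j ∧ w j = x) :
    ∃ S : Finset ℕ, (∀ j ∈ S, m ≤ j) ∧ S.sup w = T.sup id := by
  classical
  set idx : α → ℕ := fun x => if h : ∃ j, m ≤ j ∧ w j = x then h.choose else 0 with hidx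
  have hspec : ∀ x ∈ T, m ≤ idx x ∧ w (idx x) = x := by
    intro x hx
    have h := hT x hx
    simp only [hidx, dif_pos h]
    exact h.choose_spec
  refine ⟨T.image idx, ?_, ?_⟩
  · intro j hj
    rw [Finset.mem_image] at hj
    obtain ⟨x, hx, rfl⟩ := hj
    exact (hspec x hx).1
  · rw [Finset.sup_image]
    exact Finset.sup_congr rfl fun x hx => (hspec x hx).2

lemma auxKey (F : Finset α → α)
    (hFsel : ∀ A : Finset α, A.Nonempty → IsAC (↑A : Set α) → F A ∈ A)
    (n : ℕ) (W : Set α) (hW : IsCMA W) :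
    ∃ E : Finset α, ↑E ⊆ W ∧
      (((E.sup id)ᶜ = ⊥) ∨
        ∀ T : Finset α, ↑T ⊆ W → (∀ x ∈ T, x ∉ E) →
          ∃ B : Finset α, IsAC (↑B : Set α) ∧ 2 ^ n ≤ B.card ∧ T.sup id ≤ F B) := by
  classical
  by_cases hfin : W.Finite
  · refine ⟨hfin.toFinset, by simp, Or.inl ?_⟩
    by_contra hx
    obtain ⟨u, huW, hub⟩ := hW.2.2 _ hx
    have h1 : u ≤ hfin.toFinset.sup id := Finset.le_sup (f := id) (hfin.mem_toFinset.mpr huW)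
    apply hub
    apply le_bot_iff.mp
    calc u ⊓ (hfin.toFinset.sup id)ᶜ ≤ hfin.toFinset.sup id ⊓ (hfin.toFinset.sup id)ᶜ :=
        inf_le_inf h1 le_rfl
      _ = ⊥ := inf_compl_eq_bot
  · obtain ⟨w, hwinj, hwmem, hwsurj⟩ := auxEnum hW.1 hfin
    have hwd : ∀ i j : ℕ, i ≠ j → w i ⊓ w j = ⊥ := fun i j hij =>
      hW.2.1.2 (hwmem i) (hwmem j) fun h => hij (hwinj h)
    have hwb : ∀ j, w j ≠ ⊥ := fun j h => hW.2.1.1 (h ▸ hwmem j)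
    obtain ⟨hB₀AC, hB₀card⟩ := auxMkAC w (2 ^ n) (fun i _ => hwb i)
      (fun i j _ _ hij => hwd i j hij)
    have main : ∃ m : ℕ, ∀ S : Finset ℕ, (∀ j ∈ S, m ≤ j) →
        ∃ B : Finset α, IsAC (↑B : Set α) ∧ 2 ^ n ≤ B.card ∧ S.sup w ≤ F B := by
      by_contra hcon
      push_neg at hcon
      choose S hS1 hS2 using hcon
      have hSne : ∀ m, (S m).Nonempty := by
        intro m
        rcases Finset.eq_empty_or_nonempty (S m) with he | h
        · exfalso
          have h0 := hS2 m ((Finset.range (2 ^ n)).image w) hB₀AC (le_of_eq hB₀card.symm)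
          rw [he, Finset.sup_empty] at h0
          exact h0 bot_le
        · exact h
      set t : ℕ → ℕ := fun i => Nat.rec (motive := fun _ => ℕ) 0
        (fun _ ih => (S ih).sup id + 1) i with ht
      have htsucc : ∀ i, t (i + 1) = (S (t i)).sup id + 1 := fun i => rfl
      have htlt : ∀ i, t i < t (i + 1) := by
        intro i
        obtain ⟨j, hj⟩ := hSne (t i)
        have h1 : t i ≤ j := hS1 (t i) j hj
        have h2 : j ≤ (S (t i)).sup id := Finset.le_sup (f := id) hj
        have h3 := htsucc i
        omega
      have htm : StrictMono t := strictMono_nat_of_lt_succ htlt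
      set u : ℕ → α := fun i => (S (t i)).sup w with hu
      have hudisj : ∀ i i', i ≠ i' → u i ⊓ u i' = ⊥ := by
        have key : ∀ i i', i < i' → u i ⊓ u i' = ⊥ := by
          intro i i' hii
          apply auxFinsetSupInf
          intro a ha b hb
          have h1 : a ≤ (S (t i)).sup id := Finset.le_sup (f := id) ha
          have h2 : t i' ≤ b := hS1 (t i') b hb
          have h3 : t (i + 1) ≤ t i' := htm.monotone (Nat.succ_le_of_lt hii)
          have h4 := htsucc i
          exact hwd a b (by omega)
        intro i i' hii
        rcases lt_or_gt_of_ne hii with h | h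
        · exact key i i' h
        · rw [inf_comm]; exact key i' i h
      have hune : ∀ i, u i ≠ ⊥ := by
        intro i hbot
        have h0 := hS2 (t i) ((Finset.range (2 ^ n)).image w) hB₀AC (le_of_eq hB₀card.symm)
        have hbot' : (S (t i)).sup w = ⊥ := hbot
        exact h0 (hbot' ▸ bot_le)
      obtain ⟨hBAC, hBcard⟩ := auxMkAC u (2 ^ n) (fun i _ => hune i)
        (fun i j _ _ hij => hudisj i j hij)
      have hmem := hFsel ((Finset.range (2 ^ n)).image u)
        (Finset.card_pos.mp (by rw [hBcard]; positivity)) hBAC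
      rw [Finset.mem_image] at hmem
      obtain ⟨i, hi, hFeq⟩ := hmem
      refine hS2 (t i) ((Finset.range (2 ^ n)).image u) hBAC (le_of_eq hBcard.symm) ?_
      show (S (t i)).sup w ≤ _
      rw [← hFeq]
    obtain ⟨m, hm⟩ := main
    refine ⟨(Finset.range m).image w, ?_, Or.inr ?_⟩
    · intro x hx
      rw [Finset.coe_image, Set.mem_image] at hx
      obtain ⟨j, _, rfl⟩ := hx
      exact hwmem j
    · intro T hTW hTE
      have hT : ∀ x ∈ T, ∃ j, m ≤ j ∧ w j = x := by
        intro x hx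
        obtain ⟨j, hj⟩ := hwsurj x (hTW (Finset.mem_coe.mpr hx))
        refine ⟨j, ?_, hj⟩
        by_contra hjm
        push_neg at hjm
        exact hTE x hx (Finset.mem_image.mpr ⟨j, Finset.mem_range.mpr hjm, hj⟩)
      obtain ⟨S, hSm, hSsup⟩ := auxChunk w m T hT
      obtain ⟨B, h1, h2, h3⟩ := hm S hSm
      exact ⟨B, h1, h2, hSsup ▸ h3⟩

end Aux

/-- Every weakly distributive, uniformly concentrated Boolean σ-algebra is
uniformly weakly distributive. -/
theorem weaklyDistributive_uniformlyConcentrated_imp_uniformlyWeaklyDistributive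
    (α : Type u) [BooleanSigmaAlgebra α] (hwd : WeaklyDistributive α)
    (huc : UniformlyConcentrated α) :
    UniformlyWeaklyDistributive α := by
  classical
  obtain ⟨F, hFsel, hFlim⟩ := huc
  choose E hE1 hE2 using fun (n : ℕ) (W : Set α) (hW : IsCMA W) => auxKey F hFsel n W hW
  refine ⟨fun n W => if h : IsCMA W then E n W h else ∅, fun n W hW => ?_, fun W hW => ?_⟩
  · show ↑(if h : IsCMA W then E n W h else ∅) ⊆ W
    rw [dif_pos hW]; exact hE1 n W hW
  · obtain ⟨E', hE'sub, hE'top⟩ := hwd W hW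
    -- the auxiliary "small part" sequence
    obtain ⟨s, hs1, hs2⟩ : ∃ s : ℕ → α,
        (∀ k, ((E k (W k) (hW k)).sup id)ᶜ = ⊥ → s k = ⊥) ∧
        (∀ k, ¬ ((E k (W k) (hW k)).sup id)ᶜ = ⊥ →
          s k = (E' k \ E k (W k) (hW k)).sup id) :=
      ⟨fun k => if ((E k (W k) (hW k)).sup id)ᶜ = ⊥ then ⊥
        else (E' k \ E k (W k) (hW k)).sup id,
       fun k h => if_pos h, fun k h => if_neg h⟩
    have claim1 : ∀ k, ((E k (W k) (hW k)).sup id)ᶜ ≤ ((E' k).sup id)ᶜ ⊔ s k := by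
      intro k
      by_cases hk : ((E k (W k) (hW k)).sup id)ᶜ = ⊥
      · rw [hk]; exact bot_le
      · rw [hs2 k hk]
        set gsup := (E k (W k) (hW k)).sup id with hgsup
        set e := (E' k).sup id with he
        set sk := (E' k \ E k (W k) (hW k)).sup id with hsk
        have h1 : e ≤ sk ⊔ gsup := by
          refine Finset.sup_le fun x hx => ?_
          by_cases hxG : x ∈ E k (W k) (hW k)
          · exact le_sup_of_le_right (Finset.le_sup (f := id) hxG)
          · exact le_sup_of_le_left
              (Finset.le_sup (f := id) (Finset.mem_sdiff.mpr ⟨hx, hxG⟩))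
        have h2 : gsupᶜ = gsupᶜ ⊓ e ⊔ gsupᶜ ⊓ eᶜ := by
          rw [← inf_sup_left, sup_compl_eq_top, inf_top_eq]
        have h3 : gsupᶜ ⊓ e ≤ sk := by
          have hbot : gsupᶜ ⊓ gsup = ⊥ := by rw [inf_comm]; exact inf_compl_eq_bot
          calc gsupᶜ ⊓ e ≤ gsupᶜ ⊓ (sk ⊔ gsup) := inf_le_inf_left _ h1
            _ = gsupᶜ ⊓ sk ⊔ gsupᶜ ⊓ gsup := inf_sup_left _ _ _
            _ = gsupᶜ ⊓ sk := by rw [hbot, sup_bot_eq]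
            _ ≤ sk := inf_le_right
        calc gsupᶜ = gsupᶜ ⊓ e ⊔ gsupᶜ ⊓ eᶜ := h2
          _ ≤ sk ⊔ eᶜ := sup_le_sup h3 inf_le_right
          _ = eᶜ ⊔ sk := sup_comm _ _
    have claim2 : ∀ k, s k ≠ ⊥ →
        ∃ B : Finset α, IsAC (↑B : Set α) ∧ 2 ^ k ≤ B.card ∧ s k ≤ F B := by
      intro k hsk
      have hk : ¬ ((E k (W k) (hW k)).sup id)ᶜ = ⊥ := fun h => hsk (hs1 k h)
      rcases hE2 k (W k) (hW k) with h | h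
      · exact absurd h hk
      · obtain ⟨B, h1, h2, h3⟩ := h (E' k \ E k (W k) (hW k))
          (fun x hx => hE'sub k
            (Finset.mem_coe.mpr (Finset.mem_sdiff.mp (Finset.mem_coe.mp hx)).1))
          (fun x hx => (Finset.mem_sdiff.mp hx).2)
        exact ⟨B, h1, h2, by rw [hs2 k hk]; exact h3⟩
    have hd : blimsup (fun k => ((E' k).sup id)ᶜ) = ⊥ := (auxTendstoTopIff _).mp hE'top
    have hsbot : blimsup s = ⊥ := by
      by_cases hfin : ∃ K, ∀ k, K ≤ k → s k = ⊥
      · obtain ⟨K, hK⟩ := hfin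
        exact auxBlimsupEventuallyBot s K hK
      · push_neg at hfin
        choose σ hσ1 hσ2 using hfin
        have hex : ∀ k : ℕ, ∃ B : Finset α,
            (IsAC (↑B : Set α) ∧ 2 ^ k ≤ B.card) ∧ s k ≤ F B := by
          intro k
          by_cases hk : s k = ⊥
          · obtain ⟨B, h1, h2, h3⟩ := claim2 (σ k) (hσ2 k)
            exact ⟨B, ⟨h1, le_trans (Nat.pow_le_pow_right (by norm_num) (hσ1 k)) h2⟩,
              by rw [hk]; exact bot_le⟩
          · obtain ⟨B, h1, h2, h3⟩ := claim2 k hk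
            exact ⟨B, ⟨h1, h2⟩, h3⟩
        choose B hB hle using hex
        have hF := hFlim B hB
        exact le_bot_iff.mp ((auxBlimsupMono hle).trans (le_of_eq hF))
    have hmain : TendstoTop fun k => (E k (W k) (hW k)).sup id := by
      apply (auxTendstoTopIff _).mpr
      apply le_bot_iff.mp
      calc blimsup (fun k => ((E k (W k) (hW k)).sup id)ᶜ)
          ≤ blimsup (fun k => ((E' k).sup id)ᶜ ⊔ s k) := auxBlimsupMono claim1
        _ ≤ blimsup (fun k => ((E' k).sup id)ᶜ) ⊔ blimsup s := auxBlimsupSup _ _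
        _ ≤ ⊥ := by rw [hd, hsbot, sup_idem]
    have heq : (fun n => (if h : IsCMA (W n) then E n (W n) h else ∅).sup id)
        = fun n => (E n (W n) (hW n)).sup id := funext fun n => by rw [dif_pos (hW n)]
    show TendstoTop fun n => (if h : IsCMA (W n) then E n (W n) h else ∅).sup id
    rw [heq]
    exact hmain
end
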